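/- Let K be a free augmented directed complex such that ∂⁺a is a single basis element whenever a is a positive-dimensional basis element. Then for every q-dimensional basis element a and every integer r with 0 < r ≤ q, the chain (∂⁺)^{r−1}a is a basis element, (∂⁻)^r a = ∂⁻((∂⁺)^{r−1}a), and (∂⁺)^r a = ∂⁺((∂⁺)^{r−1}a). -/
import Mathlib


open Finsupp

/-- A free augmented directed complex, encoded by its distinguished graded basis:
`B` is the set of basis elements, `dim` the dimension function, `bd a` the boundary
chain of a basis element `a`, and `eps` the augmentation (supported in dimension 0). -/
structure FADC where
  B : Type
  dim : B → ℕ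
  bd : B → (B →₀ ℤ)
  eps : B → ℤ
  bd_dim : ∀ a b, b ∈ (bd a).support → dim b + 1 = dim a
  eps_dim : ∀ b, 0 < dim b → eps b = 0
  bd_bd : ∀ a : B, ((bd a).sum fun b n => n • bd b) = 0
  eps_bd : ∀ a : B, ((bd a).sum fun b n => n * eps b) = 0

namespace FADC

variable (K : FADC)

/-- The boundary homomorphism `∂`, extended to chains. -/
noncomputable def bdc (c : K.B →₀ ℤ) : K.B →₀ ℤ := c.sum fun b n => n • K.bd b

/-- The augmentation `ε`, extended to chains. -/
noncomputable def epsc (c : K.B →₀ ℤ) : ℤ := c.sum fun b n => n * K.eps b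

/-- `∂⁺c`, the positive part of `∂c`. -/
noncomputable def bdp (c : K.B →₀ ℤ) : K.B →₀ ℤ := (K.bdc c).mapRange (fun n => max n 0) (by simp)

/-- `∂⁻c`, the negative part of `∂c`. -/
noncomputable def bdm (c : K.B →₀ ℤ) : K.B →₀ ℤ := (-K.bdc c).mapRange (fun n => max n 0) (by simp)

/-- `K` is unital if `ε((∂⁻)^q a) = ε((∂⁺)^q a) = 1` for every `q`-dimensional
basis element `a`. -/
def Unital : Prop := ∀ a : K.B,
  K.epsc (K.bdm^[K.dim a] (Finsupp.single a 1)) = 1 ∧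
  K.epsc (K.bdp^[K.dim a] (Finsupp.single a 1)) = 1

/-- `K` is loop-free if its basis elements admit a (strict) partial order such that
for every basis element `a` and every `r > 0`, the basis elements occurring in
`(∂⁻)^r a` strictly precede those occurring in `(∂⁺)^r a`. -/
def LoopFree : Prop :=
  ∃ lt : K.B → K.B → Prop, IsStrictOrder K.B lt ∧
    ∀ (a : K.B) (r : ℕ), 0 < r →
      ∀ b ∈ (K.bdm^[r] (Finsupp.single a 1)).support,
        ∀ b' ∈ (K.bdp^[r] (Finsupp.single a 1)).support, lt b b'

/-- `K` is atomic of dimension `n`. -/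
def Atomic (n : ℕ) : Prop :=
  (∀ b : K.B, K.dim b ≤ n) ∧
  (∃! g : K.B, K.dim g = n) ∧
  (∀ b : K.B, K.dim b < n → ∃ a : K.B, K.dim b < K.dim a ∧
    (b ∈ (K.bdm (Finsupp.single a 1)).support ∨ b ∈ (K.bdp (Finsupp.single a 1)).support))

/-- `g_q^α(x)`: given `x_q^- = xq` and `x_{q+1}^α = c`, this is
`x_q^- + ∂⁺a_1 + … + ∂⁺a_k` where `a_1, …, a_k` are the terms of `c`. -/
noncomputable def gch (xq c : K.B →₀ ℤ) : K.B →₀ ℤ :=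
  xq + c.sum fun b n => n • K.bdp (Finsupp.single b 1)

/-- The negative chains `⟨K⟩_q^- = (∂⁻)^{n-q} g` of the canonical atom. -/
noncomputable def atomNeg (g : K.B) (n q : ℕ) : K.B →₀ ℤ :=
  if q ≤ n then K.bdm^[n - q] (Finsupp.single g 1) else 0

/-- The positive chains `⟨K⟩_q^+ = (∂⁺)^{n-q} g` of the canonical atom. -/
noncomputable def atomPos (g : K.B) (n q : ℕ) : K.B →₀ ℤ :=
  if q ≤ n then K.bdp^[n - q] (Finsupp.single g 1) else 0

end FADC

/-- Membership in `νK`: the double sequence `(x_0^-, x_0^+ | x_1^-, x_1^+ | …)`,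
given by `xm` and `xp`, is a member of `νK`. -/
structure NuMem (K : FADC) (xm xp : ℕ → (K.B →₀ ℤ)) : Prop where
  dim_m : ∀ q, ∀ b ∈ (xm q).support, K.dim b = q
  dim_p : ∀ q, ∀ b ∈ (xp q).support, K.dim b = q
  nonneg_m : ∀ q b, 0 ≤ xm q b
  nonneg_p : ∀ q b, 0 ≤ xp q b
  fin : ∃ n, ∀ q, n < q → xm q = 0 ∧ xp q = 0
  eps_m : K.epsc (xm 0) = 1
  eps_p : K.epsc (xp 0) = 1
  bd_m : ∀ q, K.bdc (xm (q + 1)) = xp q - xm q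
  bd_p : ∀ q, K.bdc (xp (q + 1)) = xp q - xm q

/-- `K` together with the class `thin` of thin basis elements is an
`n`-dimensional opetopic directed complex. -/
structure IsODC (K : FADC) (thin : K.B → Prop) (n : ℕ) : Prop where
  atomic : K.Atomic n
  loopFree : K.LoopFree
  unital : K.Unital
  thin_pos : ∀ b, thin b → 0 < K.dim b
  bdp_basis : ∀ b : K.B, 0 < K.dim b →
    ∃ a : K.B, ¬ thin a ∧ K.bdp (Finsupp.single b 1) = Finsupp.single a 1
  bdm_thin : ∀ b : K.B, thin b →
    ∃ a : K.B, ¬ thin a ∧ K.bdm (Finsupp.single b 1) = Finsupp.single a 1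

/-- An opetopic directed complex is reduced if every thin basis element is `∂⁻a`
for some other basis element `a`. -/
def ODCReduced (K : FADC) (thin : K.B → Prop) : Prop :=
  ∀ b, thin b → ∃ a, a ≠ b ∧ K.bdm (Finsupp.single a 1) = Finsupp.single b 1

/-- A network: finite sets of edges and vertices with partially defined source and
target functions; input edges are those with no source, output edges those with no
target. -/
structure Network where
  E : Type
  V : Type
  finE : Finite E
  finV : Finite V
  src : E → Option V
  tgt : E → Option V

namespace Network

variable (N : Network)

/-- One step of a path: the target of `e` is the source of `e'`. -/
def step (e e' : N.E) : Prop := ∃ v : N.V, N.tgt e = some v ∧ N.src e' = some v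

/-- There is a path from `e` to `e'`. -/
def PathTo (e e' : N.E) : Prop := Relation.ReflTransGen N.step e e'

/-- A network is acyclic if there is no nontrivial path from an edge to itself. -/
def Acyclic : Prop := ∀ e : N.E, ¬ Relation.TransGen N.step e e

/-- A network is linear if it is acyclic and consists of a single path
`e_0, v_1, e_1, …, v_k, e_k`. -/
def Linear : Prop := N.Acyclic ∧
  ∃ (k : ℕ) (e : Fin (k + 1) ≃ N.E) (v : Fin k ≃ N.V),
    N.src (e 0) = none ∧ N.tgt (e (Fin.last k)) = none ∧
    ∀ i : Fin k, N.tgt (e i.castSucc) = some (v i) ∧ N.src (e i.succ) = some (v i)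

/-- A network is confluent if it is acyclic, has a unique output edge, and every
vertex is the source of exactly one edge and the target of at least one edge. -/
def Confluent : Prop := N.Acyclic ∧ (∃! e : N.E, N.tgt e = none) ∧
  (∀ v : N.V, ∃! e : N.E, N.src e = some v) ∧ (∀ v : N.V, ∃ e : N.E, N.tgt e = some v)

end Network

/-- An opetopic network: an acyclic network with a unique output edge, together with
thin edges (which are inputs) and thin vertices (each the target of exactly one edge,
which is not thin). -/
structure OpetopicNetwork extends Network where
  thinE : E → Prop
  thinV : V → Prop
  acyclic : toNetwork.Acyclic
  out_unique : ∃! e : E, tgt e = none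
  thinE_input : ∀ e, thinE e → src e = none
  thinV_unique : ∀ v, thinV v → ∃! e, tgt e = some v
  thinV_nonthin : ∀ v e, thinV v → tgt e = some v → ¬ thinE e

/-- An opetopic network is reduced if every thin edge has a target vertex which is
the target of no other edge. -/
def OpetopicNetwork.Reduced (N : OpetopicNetwork) : Prop :=
  ∀ e, N.thinE e → ∃ v, N.tgt e = some v ∧ ∀ e', N.tgt e' = some v → e' = e

/-- `c` is a constellation from `N` to `P`: a bijection from the vertices of `N` to
the input edges of `P`, preserving thinness, such that for every edge `e` of `P`
there is exactly one edge of `N` with a source but not a target in the preimage of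
`I_e` (the input edges of `P` from which there is a path to `e`). -/
def IsConstellation (N P : OpetopicNetwork) (c : N.V → P.E) : Prop :=
  (∀ v, P.src (c v) = none) ∧
  Function.Injective c ∧
  (∀ e : P.E, P.src e = none → ∃ v, c v = e) ∧
  (∀ v, N.thinV v ↔ P.thinE (c v)) ∧
  (∀ e : P.E, ∃! e' : N.E,
    (∃ v, N.src e' = some v ∧ P.toNetwork.PathTo (c v) e) ∧
    ¬ (∃ v, N.tgt e' = some v ∧ P.toNetwork.PathTo (c v) e))

/-- An `n`-dimensional opetopic sequence `N_0 → N_1 → … → N_n`. -/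
structure OpetopicSequence (n : ℕ) where
  N : Fin (n + 1) → OpetopicNetwork
  c : ∀ q : Fin n, (N q.castSucc).V → (N q.succ).E
  constell : ∀ q : Fin n, IsConstellation (N q.castSucc) (N q.succ) (c q)
  linear0 : (N 0).toNetwork.Linear
  noThin0 : ∀ e, ¬ (N 0).thinE e
  top_single : ∃! _e : (N (Fin.last n)).E, True
  top_noV : IsEmpty (N (Fin.last n)).V

/-- An isomorphism of opetopic sequences: families of bijections on edges and
vertices preserving sources, targets, thin edges and thin vertices, and commuting
with the constellations. -/
def SeqIso (n : ℕ) (S S' : OpetopicSequence n) : Prop :=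
  ∃ (fE : ∀ q : Fin (n + 1), (S.N q).E ≃ (S'.N q).E)
    (fV : ∀ q : Fin (n + 1), (S.N q).V ≃ (S'.N q).V),
    (∀ q : Fin (n + 1),
      (∀ e v, (S.N q).src e = some v ↔ (S'.N q).src (fE q e) = some (fV q v)) ∧
      (∀ e v, (S.N q).tgt e = some v ↔ (S'.N q).tgt (fE q e) = some (fV q v)) ∧
      (∀ e, (S.N q).thinE e ↔ (S'.N q).thinE (fE q e)) ∧
      (∀ v, (S.N q).thinV v ↔ (S'.N q).thinV (fV q v))) ∧
    (∀ q : Fin n, ∀ v, fE q.succ (S.c q v) = S'.c q (fV q.castSucc v))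

/-- The opetopic sequence `S` realizes the sequence
`G_0^-(⟨K⟩) → … → G_n^-(⟨K⟩)` associated to the opetopic directed complex `K`
(with top basis element `g` and thin elements `thin`): the edges of `S.N q`
correspond bijectively to the terms of `g_q^-(⟨K⟩)`, the vertices to the terms of
`⟨K⟩_{q+1}^-`, sources, targets and thinness are as prescribed by `∂⁺`, `∂⁻` and
`thin`, and the constellations are the identity correspondences. -/
def RealizedBy (K : FADC) (thin : K.B → Prop) (n : ℕ) (g : K.B)
    (S : OpetopicSequence n) : Prop :=
  ∃ (eE : ∀ q : Fin (n + 1), (S.N q).E → K.B)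
    (eV : ∀ q : Fin (n + 1), (S.N q).V → K.B),
    (∀ q : Fin (n + 1),
      Function.Injective (eE q) ∧
      (∀ ed, eE q ed ∈ (K.gch (K.atomNeg g n q.1) (K.atomNeg g n (q.1 + 1))).support) ∧
      (∀ b ∈ (K.gch (K.atomNeg g n q.1) (K.atomNeg g n (q.1 + 1))).support,
        ∃ ed, eE q ed = b) ∧
      Function.Injective (eV q) ∧
      (∀ v, eV q v ∈ (K.atomNeg g n (q.1 + 1)).support) ∧
      (∀ b ∈ (K.atomNeg g n (q.1 + 1)).support, ∃ v, eV q v = b) ∧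
      (∀ ed v, (S.N q).src ed = some v ↔
        eE q ed ∈ (K.bdp (Finsupp.single (eV q v) 1)).support) ∧
      (∀ ed v, (S.N q).tgt ed = some v ↔
        eE q ed ∈ (K.bdm (Finsupp.single (eV q v) 1)).support) ∧
      (∀ ed, (S.N q).thinE ed ↔ thin (eE q ed)) ∧
      (∀ v, (S.N q).thinV v ↔ thin (eV q v))) ∧
    (∀ q : Fin n, ∀ v, eE q.succ (S.c q v) = eV q.castSucc v)

/-- A bundled `n`-dimensional opetopic directed complex. -/
structure ODCBundle (n : ℕ) where
  K : FADC
  thin : K.B → Prop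
  g : K.B
  dim_g : K.dim g = n
  isODC : IsODC K thin n

/-- Isomorphism of (bundled) opetopic directed complexes: a dimension- and
thinness-preserving bijection of bases commuting with boundaries and augmentations. -/
def ODCIso {n : ℕ} (A A' : ODCBundle n) : Prop :=
  ∃ φ : A.K.B ≃ A'.K.B,
    (∀ b, A'.K.dim (φ b) = A.K.dim b) ∧
    (∀ b, A'.thin (φ b) ↔ A.thin b) ∧
    (∀ b, A'.K.bd (φ b) = Finsupp.equivMapDomain φ (A.K.bd b)) ∧
    (∀ b, A'.K.eps (φ b) = A.K.eps b)

namespace FADC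

variable (K : FADC)

/-- `bdc` bundled as a linear map. -/
noncomputable def bdcHom : (K.B →₀ ℤ) →ₗ[ℤ] (K.B →₀ ℤ) :=
  Finsupp.lsum ℤ fun b => LinearMap.toSpanSingleton ℤ (K.B →₀ ℤ) (K.bd b)

lemma bdc_eq_bdcHom (c : K.B →₀ ℤ) : K.bdc c = K.bdcHom c := by
  simp [bdc, bdcHom, Finsupp.lsum_apply, Finsupp.sum, LinearMap.toSpanSingleton_apply]

lemma bdc_single (b : K.B) : K.bdc (Finsupp.single b 1) = K.bd b := by
  classical
  simp [bdc, Finsupp.sum_single_index]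

lemma bdc_bdc (c : K.B →₀ ℤ) : K.bdc (K.bdc c) = 0 := by
  rw [show K.bdc c = c.sum fun b n => n • K.bd b from rfl, K.bdc_eq_bdcHom,
    map_finsuppSum]
  rw [Finsupp.sum]
  refine Finset.sum_eq_zero fun b _ => ?_
  have h0 : K.bdcHom (K.bd b) = 0 := by
    rw [← K.bdc_eq_bdcHom]; exact K.bd_bd b
  rw [map_smul, h0, smul_zero]

lemma bdp_eq_bdm_add_bdc (c : K.B →₀ ℤ) : K.bdp c = K.bdm c + K.bdc c := by
  ext b
  simp only [bdp, bdm, Finsupp.mapRange_apply, Finsupp.add_apply, Finsupp.neg_apply]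
  omega

lemma bdc_bdp_eq_bdc_bdm (c : K.B →₀ ℤ) : K.bdc (K.bdp c) = K.bdc (K.bdm c) := by
  rw [K.bdp_eq_bdm_add_bdc, K.bdc_eq_bdcHom (K.bdm c + K.bdc c), map_add,
    ← K.bdc_eq_bdcHom (K.bdm c), ← K.bdc_eq_bdcHom (K.bdc c), K.bdc_bdc, add_zero]

lemma bdm_congr {c c' : K.B →₀ ℤ} (h : K.bdc c = K.bdc c') : K.bdm c = K.bdm c' := by
  simp [bdm, h]

lemma bdp_congr {c c' : K.B →₀ ℤ} (h : K.bdc c = K.bdc c') : K.bdp c = K.bdp c' := by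
  simp [bdp, h]

lemma bdm_bdp_eq_bdm_bdm (c : K.B →₀ ℤ) : K.bdm (K.bdp c) = K.bdm (K.bdm c) :=
  K.bdm_congr (K.bdc_bdp_eq_bdc_bdm c)

lemma exists_single_of_bdp (hb : ∀ a : K.B, 0 < K.dim a →
      ∃ b : K.B, K.bdp (Finsupp.single a 1) = Finsupp.single b 1) :
    ∀ (s : ℕ) (a : K.B), s ≤ K.dim a →
      ∃ b : K.B, K.bdp^[s] (Finsupp.single a 1) = Finsupp.single b 1 ∧
        K.dim b = K.dim a - s := by
  intro s
  induction s with
  | zero => intro a _; exact ⟨a, by simp⟩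
  | succ s ih =>
    intro a hs
    obtain ⟨b, hbeq, hbdim⟩ := ih a (le_of_lt (Nat.lt_of_succ_le hs))
    have hpos : 0 < K.dim b := by omega
    obtain ⟨b', hb'⟩ := hb b hpos
    refine ⟨b', ?_, ?_⟩
    · rw [Function.iterate_succ_apply', hbeq, hb']
    · have hmem : b' ∈ (K.bd b).support := by
        have h1 : b' ∈ (K.bdp (Finsupp.single b 1)).support := by
          rw [hb']; simp
        have h2 : (K.bdp (Finsupp.single b 1)).support ⊆ (K.bd b).support := by
          rw [bdp, bdc_single]
          exact Finsupp.support_mapRange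
        exact h2 h1
      have := K.bd_dim b b' hmem
      omega

end FADC

/-- If `∂⁺a` is a single basis element for every positive-dimensional basis element,
then for every `q`-dimensional basis element `a` and `0 < r ≤ q`, the chain
`(∂⁺)^{r-1} a` is a basis element, `(∂⁻)^r a = ∂⁻((∂⁺)^{r-1} a)` and
`(∂⁺)^r a = ∂⁺((∂⁺)^{r-1} a)`. -/
theorem stmt4 (K : FADC)
    (hb : ∀ a : K.B, 0 < K.dim a →
      ∃ b : K.B, K.bdp (Finsupp.single a 1) = Finsupp.single b 1)
    (a : K.B) (q r : ℕ) (hq : K.dim a = q) (hr0 : 0 < r) (hrq : r ≤ q) :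
    (∃ b : K.B, K.bdp^[r - 1] (Finsupp.single a 1) = Finsupp.single b 1) ∧
    K.bdm^[r] (Finsupp.single a 1) = K.bdm (K.bdp^[r - 1] (Finsupp.single a 1)) ∧
    K.bdp^[r] (Finsupp.single a 1) = K.bdp (K.bdp^[r - 1] (Finsupp.single a 1)) := by
  refine ⟨?_, ?_, ?_⟩
  · obtain ⟨b, hbeq, _⟩ := K.exists_single_of_bdp hb (r - 1) a (by omega)
    exact ⟨b, hbeq⟩
  · -- bdm^[r] = bdm ∘ bdp^[r-1]
    clear hrq hq
    induction r with
    | zero => omega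
    | succ r ih =>
      rcases Nat.eq_zero_or_pos r with hr | hr
      · subst hr; simp
      · have h1 := ih hr
        rw [Function.iterate_succ_apply', h1, ← K.bdm_bdp_eq_bdm_bdm]
        simp only [Nat.add_sub_cancel]
        conv_rhs => rw [show r = r - 1 + 1 by omega, Function.iterate_succ_apply']
  · conv_lhs => rw [show r = (r - 1) + 1 by omega, Function.iterate_succ_apply']
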